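/- Let f : ℝ^d → ℝ ∪ {+∞} be a closed convex function with D := int(dom f) ≠ ∅, and let A be a closed set in ℝ^d such that f = f_A on cl D. Then for every x ∈ cl D one has ∂f(x) ∩ A = Arg_A(x) := argmax_{y ∈ A}(⟨x,y⟩ − f*(y)), and dom Arg_A ∩ cl D = dom ∂f = dom ∂̄f. -/

import Mathlib

/-!
By Fenchel–Young, `y ∈ ∂f(x)` iff `⟪x, y⟫ - f*(y) = f(x)`; since `f = f_A` on `cl D`, the
subgradients at `x` lying in `A` are exactly the maximisers defining `f_A(x)`.

At every `z ∈ D` that supremum is attained: if `f ≤ M` on `B(z, ρ)` then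
`f*(y) ≥ ⟪z, y⟫ + ρ‖y‖ - M`, so near-maximisers stay bounded, and `y ↦ ⟪z, y⟫ - f*(y)` is upper
semicontinuous. If moreover `f` is differentiable at `z`, the maximiser is a subgradient, hence
equals `∇f(z)`, so `∇f(z) ∈ A`.

Given `v ∈ ∂f(x)` and a ball `B(x₀, ρ) ⊆ D` on which `f ≤ M`, Rademacher's theorem yields
differentiability points in the shrunken balls `x + t (B(x₀, ρ) - x)`, and the subgradient
inequality keeps their gradients within `2 (M - f(x) + (‖x₀ - x‖ + ρ) ‖v‖) / ρ` of `v`. Along a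
subsequence the gradients converge. The graph of `∂f` is closed, so the limit lies in
`∂f(x) ∩ A` as well as among the generators of `∂̄f(x)`, and conversely every generator of
`∂̄f(x)` lies in `∂f(x)`.
-/

open Filter Topology Set Pointwise
open scoped RealInnerProductSpace

noncomputable section

abbrev Euc (d : ℕ) := EuclideanSpace ℝ (Fin d)

/-- A proper lower-semicontinuous (closed) convex function with values in `ℝ ∪ {+∞}`. -/
def ClosedConvexFun {d : ℕ} (f : Euc d → EReal) : Prop :=
  LowerSemicontinuous f ∧ (∀ x, f x ≠ ⊥) ∧ (∃ x, f x ≠ ⊤) ∧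
    ∀ x y : Euc d, ∀ a b : ℝ, 0 ≤ a → 0 ≤ b → a + b = 1 →
      f (a • x + b • y) ≤ (a : EReal) * f x + (b : EReal) * f y

/-- Subdifferential of an `EReal`-valued function. -/
def subdiff {d : ℕ} (f : Euc d → EReal) (x : Euc d) : Set (Euc d) :=
  {y | ∀ z : Euc d, ((⟪z, y⟫ : ℝ) : EReal) + f x ≤ f (x + z)}

/-- Convex conjugate. -/
def fconj {d : ℕ} (f : Euc d → EReal) (y : Euc d) : EReal :=
  ⨆ x : Euc d, ((⟪x, y⟫ : ℝ) : EReal) - f x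

/-- The function `f_A(x) = sup_{y ∈ A} (⟨x,y⟩ - f*(y))`. -/
def restrSup {d : ℕ} (f : Euc d → EReal) (A : Set (Euc d)) (x : Euc d) : EReal :=
  ⨆ y ∈ A, (((⟪x, y⟫ : ℝ) : EReal) - fconj f y)

/-- `Arg_A(x) = argmax_{y ∈ A} (⟨x,y⟩ - f*(y))`. -/
def argMaxOn {d : ℕ} (f : Euc d → EReal) (A : Set (Euc d)) (x : Euc d) : Set (Euc d) :=
  {y ∈ A | ∀ z ∈ A, ((⟪x, z⟫ : ℝ) : EReal) - fconj f z ≤ ((⟪x, y⟫ : ℝ) : EReal) - fconj f y}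

/-- Linear growth: `|g x| ≤ K (1 + |x|)`. -/
def LinGrowth {k : ℕ} (g : Euc k → ℝ) : Prop :=
  ∃ K > 0, ∀ x, |g x| ≤ K * (1 + ‖x‖)

/-- `x^{-j}`: delete the `j`-th coordinate. -/
def dropCoord {d : ℕ} (j : Fin (d + 1)) (x : Euc (d + 1)) : Euc d :=
  WithLp.toLp 2 (fun i => x (j.succAbove i))

/-- The class `H^j_C`. -/
def MemH {d : ℕ} (j : Fin (d + 1)) (C : Set (Euc (d + 1))) (h : Euc (d + 1) → ℝ) : Prop :=
  ∃ g₁ g₂ : Euc d → ℝ, ConvexOn ℝ Set.univ g₁ ∧ ConvexOn ℝ Set.univ g₂ ∧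
    LinGrowth g₁ ∧ LinGrowth g₂ ∧
    (∀ x : Euc (d + 1), h x = x j + g₁ (dropCoord j x) - g₂ (dropCoord j x)) ∧
    ∀ x : Euc (d + 1), DifferentiableAt ℝ g₁ (dropCoord j x) →
      DifferentiableAt ℝ g₂ (dropCoord j x) → gradient h x ∈ C

/-- `θ^j(C) = {y / y^j : y ∈ C}`. -/
def theta {d : ℕ} (j : Fin d) (C : Set (Euc d)) : Set (Euc d) :=
  (fun y => (y j)⁻¹ • y) '' C

/-- `w` is a regular normal to `H` at `x`: `limsup_{H ∋ y → x} ⟨w, y-x⟩/|y-x| ≤ 0`. -/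
def RegNormal {d : ℕ} (H : Set (Euc d)) (x w : Euc d) : Prop :=
  ∀ ε > 0, ∃ δ > 0, ∀ y ∈ H, y ≠ x → ‖y - x‖ < δ → ⟪w, y - x⟫ ≤ ε * ‖y - x‖

/-- `w` is a normal vector to `H` at `x`. -/
def NormalVec {d : ℕ} (H : Set (Euc d)) (x w : Euc d) : Prop :=
  ∃ xs ws : ℕ → Euc d, (∀ n, xs n ∈ H ∧ RegNormal H (xs n) (ws n)) ∧
    Tendsto xs atTop (𝓝 x) ∧ Tendsto ws atTop (𝓝 w)

/-- Effective domain `{x | f x < ∞}`. -/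
def effDom {d : ℕ} (f : Euc d → EReal) : Set (Euc d) := {x | f x ≠ ⊤}

/-- Real part of an `EReal`-valued function. -/
def toRealFun {d : ℕ} (f : Euc d → EReal) : Euc d → ℝ := fun x => (f x).toReal

/-- Points of `int (dom f)` where `f` is differentiable. -/
def domGrad {d : ℕ} (f : Euc d → EReal) : Set (Euc d) :=
  {x | x ∈ interior (effDom f) ∧ DifferentiableAt ℝ (toRealFun f) x}

/-- `range ∇f`. -/
def gradRange {d : ℕ} (f : Euc d → EReal) : Set (Euc d) :=
  (fun x => gradient (toRealFun f) x) '' domGrad f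

/-- Clarke-type subdifferential `∂̄f(x)`. -/
def clarke {d : ℕ} (f : Euc d → EReal) (x : Euc d) : Set (Euc d) :=
  closure (convexHull ℝ
    {v | ∃ xs : ℕ → Euc d, (∀ n, xs n ∈ domGrad f) ∧ Tendsto xs atTop (𝓝 x) ∧
      Tendsto (fun n => gradient (toRealFun f) (xs n)) atTop (𝓝 v)})

/-- Singular set `Σ^j_A(Ψ)`. -/
def SigmaJ {d : ℕ} (Ψ : Euc d → Set (Euc d)) (j : Fin d) (A : Set (Euc d)) : Set (Euc d) :=
  {x | ∃ y₁ ∈ Ψ x ∩ A, ∃ y₂ ∈ Ψ x ∩ A, y₁ j ≠ y₂ j}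

/-- The bilinear form `S(x,y) = ∑ x^i S^{ij} y^j`. -/
def Sbil {d : ℕ} (S : Matrix (Fin d) (Fin d) ℝ) (x y : Euc d) : ℝ :=
  ∑ i, ∑ k, x i * S i k * y k

/-- Matrix acting on a vector. -/
def matVec {d : ℕ} (M : Matrix (Fin d) (Fin d) ℝ) (y : Euc d) : Euc d :=
  WithLp.toLp 2 (fun i => ∑ k, M i k * y k)

/-- Fitzpatrick function `ψ_G(x) = sup_{y ∈ G}(S(x,y) - S(y,y)/2)`. -/
def fitz {d : ℕ} (S : Matrix (Fin d) (Fin d) ℝ) (G : Set (Euc d)) (x : Euc d) : EReal :=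
  ⨆ y ∈ G, ((Sbil S x y - Sbil S y y / 2 : ℝ) : EReal)

/-- `S`-monotone set. -/
def SMonotone {d : ℕ} (S : Matrix (Fin d) (Fin d) ℝ) (G : Set (Euc d)) : Prop :=
  ∀ x ∈ G, ∀ y ∈ G, 0 ≤ Sbil S (x - y) (x - y)

/-- Projection `P_G(x) = argmin_{y ∈ G} S(x-y, x-y)`. -/
def proj {d : ℕ} (S : Matrix (Fin d) (Fin d) ℝ) (G : Set (Euc d)) (x : Euc d) : Set (Euc d) :=
  {y ∈ G | ∀ z ∈ G, Sbil S (x - y) (x - y) ≤ Sbil S (x - z) (x - z)}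

/-- `S`-regular normal vector. -/
def SRegNormal {d : ℕ} (S : Matrix (Fin d) (Fin d) ℝ) (H : Set (Euc d)) (x w : Euc d) : Prop :=
  ∀ ε > 0, ∃ δ > 0, ∀ y ∈ H, y ≠ x → ‖y - x‖ < δ → Sbil S w (y - x) ≤ ε * ‖y - x‖

/-- `S`-normal vector. -/
def SNormal {d : ℕ} (S : Matrix (Fin d) (Fin d) ℝ) (H : Set (Euc d)) (x w : Euc d) : Prop :=
  ∃ xs ws : ℕ → Euc d, (∀ n, xs n ∈ H ∧ SRegNormal S H (xs n) (ws n)) ∧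
    Tendsto xs atTop (𝓝 x) ∧ Tendsto ws atTop (𝓝 w)

/-- First-order singular set `Σ₁^j(P_G)`. -/
def Sigma1J {d : ℕ} (S : Matrix (Fin d) (Fin d) ℝ) (G : Set (Euc d)) (j : Fin d) :
    Set (Euc d) :=
  {x | ∃ y₁ ∈ proj S G x, ∃ y₂ ∈ proj S G x,
    0 < Sbil S (y₁ - y₂) (y₁ - y₂) ∧ y₁ j ≠ y₂ j}

/-- Zero-order singular set `Σ̄₀^j(P_G)`. -/
def Sigma0J {d : ℕ} (S : Matrix (Fin d) (Fin d) ℝ) (G : Set (Euc d)) (j : Fin d) :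
    Set (Euc d) :=
  {x | ∃ y₁ ∈ proj S G x, ∃ y₂ ∈ proj S G x,
    Sbil S (y₁ - y₂) (y₁ - y₂) = 0 ∧ y₁ j ≠ y₂ j}

/-- The canonical bilinear form of index `m` on `ℝ^m × ℝ^k`. -/
def Lam {m k : ℕ} (p q : Euc m × Euc k) : ℝ := ⟪p.1, q.1⟫ - ⟪p.2, q.2⟫

open Metric

namespace EReal

theorem coe_sub_le_coe_sub_iff (a b : ℝ) (u v : EReal) :
    (a : EReal) - u ≤ b - v ↔ ((a - b : ℝ) : EReal) + v ≤ u := by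
  induction u <;> induction v <;> simp [← EReal.coe_sub, ← EReal.coe_add]
  constructor <;> intro h <;> linarith

theorem coe_sub_eq_iff (a : ℝ) (c u : EReal) : (a : EReal) - c = u ↔ c = a - u := by
  induction c <;> induction u <;> simp [← EReal.coe_sub]
  constructor <;> intro h <;> linarith

end EReal

theorem Continuous.lowerSemicontinuous_coe_add {α : Type*} [TopologicalSpace α] {g : α → ℝ}
    {h : α → EReal} (hg : Continuous g) (hh : LowerSemicontinuous h) :
    LowerSemicontinuous fun x => (g x : EReal) + h x :=
  (continuous_coe_real_ereal.comp hg).lowerSemicontinuous.add' hh fun _ =>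
    EReal.continuousAt_add (Or.inl (EReal.coe_ne_top _)) (Or.inl (EReal.coe_ne_bot _))

theorem Continuous.upperSemicontinuous_coe_sub {α : Type*} [TopologicalSpace α] {g : α → ℝ}
    {h : α → EReal} (hg : Continuous g) (hh : LowerSemicontinuous h) :
    UpperSemicontinuous fun x => (g x : EReal) - h x :=
  (continuous_coe_real_ereal.comp hg).upperSemicontinuous.add'
    (continuous_neg.comp_lowerSemicontinuous_antitone hh EReal.neg_strictAnti.antitone)
    fun _ => EReal.continuousAt_add (Or.inl (EReal.coe_ne_top _)) (Or.inl (EReal.coe_ne_bot _))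

section InnerProductSpace

variable {E : Type*} [NormedAddCommGroup E] [InnerProductSpace ℝ E]

theorem mul_norm_le_of_forall_inner_le {z a : E} {r B : ℝ} (hr : 0 ≤ r)
    (h : ∀ w ∈ closedBall z r, ⟪w - z, a⟫ ≤ B) : r * ‖a‖ ≤ B := by
  rcases eq_or_ne a 0 with rfl | ha
  · simpa using h z (mem_closedBall_self hr)
  · have hna : ‖a‖ ≠ 0 := norm_ne_zero_iff.2 ha
    have hw : z + (r / ‖a‖) • a ∈ closedBall z r := by
      rw [mem_closedBall, dist_eq_norm, add_sub_cancel_left, norm_smul, Real.norm_eq_abs,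
        abs_of_nonneg (by positivity), div_mul_cancel₀ _ hna]
    have := h _ hw
    rwa [add_sub_cancel_left, real_inner_smul_left, real_inner_self_eq_norm_sq,
      div_mul_eq_mul_div, pow_two, mul_div_assoc, mul_div_cancel_left₀ _ hna] at this

variable [CompleteSpace E] {F : E → ℝ} {z y : E}

theorem HasGradientAt.eq_of_eventually_le {g : E} (hF : HasGradientAt F g z)
    (h : ∀ᶠ w in 𝓝 z, F z + ⟪w - z, y⟫ ≤ F w) : g = y := by
  have hmin : IsLocalMin (fun w => F w - ⟪w - z, y⟫) z := by
    filter_upwards [h] with w hw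
    simp only [sub_self, inner_zero_left, sub_zero]
    linarith
  have hlin : HasFDerivAt (fun w => ⟪w - z, y⟫) (InnerProductSpace.toDual ℝ E y) z := by
    have := (InnerProductSpace.toDual ℝ E y : StrongDual ℝ E).hasFDerivAt.comp z
      ((hasFDerivAt_id z).sub_const z)
    simpa [Function.comp_def, real_inner_comm] using this
  have := hmin.hasFDerivAt_eq_zero (hF.hasFDerivAt.sub hlin)
  rwa [← map_sub, LinearIsometryEquiv.map_eq_zero_iff, sub_eq_zero] at this

theorem ConvexOn.inner_gradient_le {S : Set E} (hF : ConvexOn ℝ S F) {w : E} (hz : z ∈ S)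
    (hw : w ∈ S) (hd : DifferentiableAt ℝ F z) : ⟪w - z, gradient F z⟫ ≤ F w - F z := by
  set φ := AffineMap.lineMap (k := ℝ) z w
  have hφ : ConvexOn ℝ (Icc 0 1) (F ∘ φ) :=
    (hF.comp_affineMap φ).subset (fun t ht => hF.1.lineMap_mem hz hw ht) (convex_Icc 0 1)
  have hderiv : HasDerivAt (F ∘ φ) ⟪w - z, gradient F z⟫ 0 := by
    have hd' : HasFDerivAt F (InnerProductSpace.toDual ℝ E (gradient F z)) (φ 0) := by
      simpa [φ] using hd.hasGradientAt.hasFDerivAt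
    simpa [real_inner_comm] using hd'.comp_hasDerivAt (0 : ℝ) AffineMap.hasDerivAt_lineMap
  have := hφ.le_slope_of_hasDerivAt (x := 0) (y := 1) (by simp) (by simp) one_pos hderiv
  simpa [slope, φ] using this

end InnerProductSpace

theorem ConvexOn.exists_differentiableAt {E : Type*} [NormedAddCommGroup E] [NormedSpace ℝ E]
    [FiniteDimensional ℝ E] {U : Set E} {F : E → ℝ} (hF : ConvexOn ℝ U F) (hU : IsOpen U)
    (hne : U.Nonempty) : ∃ z ∈ U, DifferentiableAt ℝ F z := by
  borelize E
  obtain ⟨x, hx⟩ := hne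
  obtain ⟨K, t, ht, hK⟩ := hF.locallyLipschitzOn hU hx
  obtain ⟨V, hVt, hVo, hxV⟩ :=
    _root_.mem_nhds_iff.1 (inter_mem (hU.nhdsWithin_eq hx ▸ ht) (hU.mem_nhds hx))
  have hae := (hK.mono fun y hy => (hVt hy).1).ae_differentiableWithinAt_of_mem
    (μ := MeasureTheory.Measure.addHaar)
  obtain ⟨z, hzV, hz⟩ :=
    (MeasureTheory.Measure.dense_of_ae hae).inter_open_nonempty V hVo ⟨x, hxV⟩
  exact ⟨z, (hVt hzV).2, (hz hzV).differentiableAt (hVo.mem_nhds hzV)⟩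

section Subdifferential

variable {d : ℕ} {f : Euc d → EReal} {x y : Euc d}

theorem mem_subdiff_iff_forall_le :
    y ∈ subdiff f x ↔ ∀ w, ((⟪w - x, y⟫ : ℝ) : EReal) + f x ≤ f w :=
  ⟨fun h w => by simpa using h (w - x), fun h z => by simpa using h (x + z)⟩

theorem inner_sub_le_fconj (f : Euc d → EReal) (x y : Euc d) :
    ((⟪x, y⟫ : ℝ) : EReal) - f x ≤ fconj f y :=
  le_iSup (fun x => ((⟪x, y⟫ : ℝ) : EReal) - f x) x

theorem mem_subdiff_iff_fconj :
    y ∈ subdiff f x ↔ ((⟪x, y⟫ : ℝ) : EReal) - fconj f y = f x := by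
  rw [EReal.coe_sub_eq_iff, mem_subdiff_iff_forall_le, le_antisymm_iff,
    and_iff_left (inner_sub_le_fconj f x y), fconj, iSup_le_iff]
  refine forall_congr' fun w => ?_
  rw [EReal.coe_sub_le_coe_sub_iff, ← inner_sub_left]

theorem subdiff_inter_eq_argMaxOn {A : Set (Euc d)} (hx : restrSup f A x = f x) :
    subdiff f x ∩ A = argMaxOn f A x := by
  ext y
  simp only [mem_inter_iff, argMaxOn, mem_ofPred_eq, mem_subdiff_iff_fconj, ← hx]
  refine and_comm.trans (and_congr_right fun hy => ⟨fun h z hz => ?_, fun h => ?_⟩)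
  · exact h ▸ le_iSup₂ (f := fun z _ => ((⟪x, z⟫ : ℝ) : EReal) - fconj f z) z hz
  · exact le_antisymm (le_iSup₂ (f := fun z _ => ((⟪x, z⟫ : ℝ) : EReal) - fconj f z) y hy)
      (iSup₂_le h)

theorem lowerSemicontinuous_fconj (f : Euc d → EReal) : LowerSemicontinuous (fconj f) :=
  lowerSemicontinuous_iSup fun _ =>
    (continuous_const.inner continuous_id).lowerSemicontinuous_coe_add lowerSemicontinuous_const

theorem isClosed_subdiff_graph (hf : LowerSemicontinuous f) :
    IsClosed {p : Euc d × Euc d | p.2 ∈ subdiff f p.1} := by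
  simp only [mem_subdiff_iff_forall_le, ofPred_forall]
  exact isClosed_iInter fun w =>
    (((continuous_const.sub continuous_fst).inner continuous_snd).lowerSemicontinuous_coe_add
      (hf.comp continuous_fst)).isClosed_preimage (f w)

theorem mem_subdiff_of_tendsto (hf : LowerSemicontinuous f) {xs ys : ℕ → Euc d}
    (hys : ∀ n, ys n ∈ subdiff f (xs n)) (hx : Tendsto xs atTop (𝓝 x))
    (hy : Tendsto ys atTop (𝓝 y)) : y ∈ subdiff f x :=
  (isClosed_subdiff_graph hf).mem_of_tendsto (hx.prodMk_nhds hy) (.of_forall hys)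

end Subdifferential

namespace ClosedConvexFun

variable {d : ℕ} {f : Euc d → EReal} {x y z v : Euc d}

theorem coe_toRealFun (hf : ClosedConvexFun f) (hx : x ∈ effDom f) :
    ((toRealFun f x : ℝ) : EReal) = f x :=
  EReal.coe_toReal hx (hf.2.1 x)

theorem convexOn_toRealFun (hf : ClosedConvexFun f) : ConvexOn ℝ (effDom f) (toRealFun f) := by
  have key : ∀ u ∈ effDom f, ∀ w ∈ effDom f, ∀ a b : ℝ, 0 ≤ a → 0 ≤ b → a + b = 1 →
      f (a • u + b • w) ≤ ((a * toRealFun f u + b * toRealFun f w : ℝ) : EReal) := by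
    intro u hu w hw a b ha hb hab
    simpa [← hf.coe_toRealFun hu, ← hf.coe_toRealFun hw] using hf.2.2.2 u w a b ha hb hab
  have hconv : Convex ℝ (effDom f) := fun u hu w hw a b ha hb hab =>
    ne_top_of_le_ne_top (EReal.coe_ne_top _) (key u hu w hw a b ha hb hab)
  refine ⟨hconv, fun u hu w hw a b ha hb hab => ?_⟩
  have := key u hu w hw a b ha hb hab
  rw [← hf.coe_toRealFun (hconv hu hw ha hb hab)] at this
  exact_mod_cast this

theorem effDom_subset_closure_interior (hf : ClosedConvexFun f)
    (hD : (interior (effDom f)).Nonempty) : effDom f ⊆ closure (interior (effDom f)) := by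
  rw [hf.convexOn_toRealFun.1.closure_interior_eq_closure_of_nonempty_interior hD]
  exact subset_closure

theorem exists_closedBall_bound (hf : ClosedConvexFun f) (hx : x ∈ interior (effDom f)) :
    ∃ ρ > 0, ∃ M, closedBall x ρ ⊆ interior (effDom f) ∧
      ∀ w ∈ closedBall x ρ, toRealFun f w ≤ M := by
  obtain ⟨ε, hε, hball⟩ := Metric.isOpen_iff.1 isOpen_interior x hx
  have hsub : closedBall x (ε / 2) ⊆ interior (effDom f) :=
    (closedBall_subset_ball (by linarith)).trans hball
  obtain ⟨M, hM⟩ := (isCompact_closedBall x (ε / 2)).bddAbove_image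
    (hf.convexOn_toRealFun.continuousOn_interior.mono hsub)
  exact ⟨ε / 2, by positivity, M, hsub, fun w hw => hM (mem_image_of_mem _ hw)⟩

theorem mem_effDom_of_mem_subdiff (hf : ClosedConvexFun f) (hy : y ∈ subdiff f x) :
    x ∈ effDom f := by
  obtain ⟨w, hw⟩ := hf.2.2.1
  intro hx
  have := mem_subdiff_iff_forall_le.1 hy w
  rw [hx, EReal.coe_add_top, top_le_iff] at this
  exact hw this

theorem mem_subdiff_iff (hf : ClosedConvexFun f) (hx : x ∈ effDom f) :
    y ∈ subdiff f x ↔ ∀ w ∈ effDom f, toRealFun f x + ⟪w - x, y⟫ ≤ toRealFun f w := by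
  rw [mem_subdiff_iff_forall_le]
  refine forall_congr' fun w => ?_
  by_cases hw : w ∈ effDom f
  · rw [← hf.coe_toRealFun hx, ← hf.coe_toRealFun hw, ← EReal.coe_add, EReal.coe_le_coe_iff,
      add_comm]
    simp [hw]
  · simp [hw, show f w = ⊤ from not_not.1 hw]

theorem gradient_mem_subdiff (hf : ClosedConvexFun f) (hz : z ∈ domGrad f) :
    gradient (toRealFun f) z ∈ subdiff f z :=
  (hf.mem_subdiff_iff (interior_subset hz.1)).2 fun _ hw => by
    linarith [hf.convexOn_toRealFun.inner_gradient_le (interior_subset hz.1) hw hz.2]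

theorem eq_gradient_of_mem_subdiff (hf : ClosedConvexFun f) (hz : z ∈ domGrad f)
    (hy : y ∈ subdiff f z) : y = gradient (toRealFun f) z := by
  refine (hz.2.hasGradientAt.eq_of_eventually_le ?_).symm
  filter_upwards [isOpen_interior.mem_nhds hz.1] with w hw
  exact (hf.mem_subdiff_iff (interior_subset hz.1)).1 hy w (interior_subset hw)

theorem mem_subdiff_of_tendsto_gradient (hf : ClosedConvexFun f) {xs : ℕ → Euc d}
    (hxs : ∀ n, xs n ∈ domGrad f) (hx : Tendsto xs atTop (𝓝 x))
    (hv : Tendsto (fun n => gradient (toRealFun f) (xs n)) atTop (𝓝 v)) : v ∈ subdiff f x :=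
  mem_subdiff_of_tendsto hf.1 (fun n => hf.gradient_mem_subdiff (hxs n)) hx hv

theorem mul_norm_le_of_lt_inner_sub_fconj (hf : ClosedConvexFun f) {ρ M a : ℝ} (hρ : 0 ≤ ρ)
    (hball : closedBall z ρ ⊆ effDom f) (hM : ∀ w ∈ closedBall z ρ, toRealFun f w ≤ M)
    (ha : (a : EReal) < ((⟪z, y⟫ : ℝ) : EReal) - fconj f y) : ρ * ‖y‖ ≤ M - a := by
  refine mul_norm_le_of_forall_inner_le (z := z) hρ fun w hw => ?_
  have hconj := inner_sub_le_fconj f w y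
  rw [← hf.coe_toRealFun (hball hw), ← EReal.coe_sub] at hconj
  have := ha.trans_le (EReal.sub_le_sub le_rfl hconj)
  rw [← EReal.coe_sub, EReal.coe_lt_coe_iff] at this
  linarith [hM w hw, inner_sub_left (𝕜 := ℝ) w z y]

theorem argMaxOn_nonempty (hf : ClosedConvexFun f) {A : Set (Euc d)} (hA : IsClosed A)
    (hz : z ∈ interior (effDom f)) (hfA : restrSup f A z = f z) :
    (argMaxOn f A z).Nonempty := by
  obtain ⟨ρ, hρ, M, hball, hM⟩ := hf.exists_closedBall_bound hz
  set c := toRealFun f z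
  set φ : Euc d → EReal := fun y => ((⟪z, y⟫ : ℝ) : EReal) - fconj f y
  set R := (M - (c - 1)) / ρ
  have hbounded : ∀ y, ((c - 1 : ℝ) : EReal) < φ y → y ∈ closedBall 0 R := fun y hy => by
    rw [mem_closedBall_zero_iff, le_div_iff₀ hρ, mul_comm]
    exact hf.mul_norm_le_of_lt_inner_sub_fconj hρ.le (hball.trans interior_subset) hM hy
  obtain ⟨y₀, hy₀A, hy₀⟩ : ∃ y ∈ A, ((c - 1 : ℝ) : EReal) < φ y := by
    refine lt_biSup_iff.1 ?_
    rw [← restrSup, hfA, ← hf.coe_toRealFun (interior_subset hz), EReal.coe_lt_coe_iff]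
    linarith
  have hφ : UpperSemicontinuous φ :=
    Continuous.upperSemicontinuous_coe_sub (by fun_prop) (lowerSemicontinuous_fconj f)
  obtain ⟨y, hy, hmax⟩ := UpperSemicontinuousOn.exists_isMaxOn (s := A ∩ closedBall 0 R)
    ⟨y₀, hy₀A, hbounded y₀ hy₀⟩ ((isCompact_closedBall 0 R).inter_left hA)
    (hφ.upperSemicontinuousOn _)
  refine ⟨y, hy.1, fun w hw => ?_⟩
  by_cases hwc : ((c - 1 : ℝ) : EReal) < φ w
  · exact hmax ⟨hw, hbounded w hwc⟩
  · exact (not_lt.1 hwc).trans (hy₀.le.trans (hmax ⟨hy₀A, hbounded y₀ hy₀⟩))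

theorem gradient_mem (hf : ClosedConvexFun f) {A : Set (Euc d)} (hA : IsClosed A)
    (hz : z ∈ domGrad f) (hfA : restrSup f A z = f z) : gradient (toRealFun f) z ∈ A := by
  obtain ⟨y, hy⟩ := hf.argMaxOn_nonempty hA hz.1 hfA
  rw [← subdiff_inter_eq_argMaxOn hfA] at hy
  exact hf.eq_gradient_of_mem_subdiff hz hy.1 ▸ hy.2

theorem inner_sub_sub_le_of_mem_subdiff (hf : ClosedConvexFun f) {g w : Euc d}
    (hg : g ∈ subdiff f z) (hv : v ∈ subdiff f x) (hw : w ∈ effDom f) :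
    ⟪w - z, g - v⟫ ≤ toRealFun f w - toRealFun f x - ⟪w - x, v⟫ := by
  have hgz := (hf.mem_subdiff_iff (hf.mem_effDom_of_mem_subdiff hg)).1 hg w hw
  have hvx := (hf.mem_subdiff_iff (hf.mem_effDom_of_mem_subdiff hv)).1 hv z
    (hf.mem_effDom_of_mem_subdiff hg)
  have hsplit : ⟪w - x, v⟫ = ⟪w - z, v⟫ + ⟪z - x, v⟫ := by
    rw [← inner_add_left, sub_add_sub_cancel]
  rw [inner_sub_right]
  linarith

theorem add_smul_sub_mem_interior_and_le (hf : ClosedConvexFun f) {p : Euc d} {t : ℝ}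
    (hx : x ∈ effDom f) (hp : p ∈ interior (effDom f)) (ht₀ : 0 < t) (ht₁ : t ≤ 1) :
    x + t • (p - x) ∈ interior (effDom f) ∧
      toRealFun f (x + t • (p - x)) ≤ toRealFun f x + t * (toRealFun f p - toRealFun f x) := by
  have hcombo : x + t • (p - x) = (1 - t) • x + t • p := by
    rw [sub_smul, one_smul, smul_sub]; abel
  rw [hcombo]
  refine ⟨hf.convexOn_toRealFun.1.combo_closure_interior_mem_interior (subset_closure hx) hp
    (a := 1 - t) (by linarith) ht₀ (by ring), ?_⟩
  have := hf.convexOn_toRealFun.2 hx (interior_subset hp) (by linarith : (0 : ℝ) ≤ 1 - t) ht₀.le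
    (by ring)
  simp only [smul_eq_mul] at this
  linarith

theorem mem_interior_and_le_of_mem_ball_homothety (hf : ClosedConvexFun f) (hx : x ∈ effDom f)
    {x₀ w : Euc d} {ρ M t : ℝ} (hball : closedBall x₀ ρ ⊆ interior (effDom f))
    (hM : ∀ p ∈ closedBall x₀ ρ, toRealFun f p ≤ M) (ht₀ : 0 < t) (ht₁ : t ≤ 1)
    (hw : w ∈ ball (x + t • (x₀ - x)) (t * ρ)) :
    w ∈ interior (effDom f) ∧ toRealFun f w ≤ toRealFun f x + t * (M - toRealFun f x) ∧
      ‖w - x‖ ≤ t * (‖x₀ - x‖ + ρ) := by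
  -- `ball (x + t • (x₀ - x)) (t * ρ)` is the image of `ball x₀ ρ` under the homothety of centre
  -- `x` and ratio `t`; `p` is the preimage of `w`.
  set p := x₀ + t⁻¹ • (w - (x + t • (x₀ - x)))
  have hp : p ∈ closedBall x₀ ρ := by
    rw [mem_closedBall, dist_eq_norm, add_sub_cancel_left, norm_smul, norm_inv,
      Real.norm_eq_abs, abs_of_pos ht₀, inv_mul_le_iff₀ ht₀]
    exact (mem_ball_iff_norm.1 hw).le
  have hwp : w = x + t • (p - x) := by
    simp only [p]
    match_scalars <;> field_simp <;> ring
  obtain ⟨hint, hle⟩ := hf.add_smul_sub_mem_interior_and_le hx (hball hp) ht₀ ht₁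
  rw [hwp]
  refine ⟨hint, hle.trans (by gcongr; exact hM p hp), ?_⟩
  rw [add_sub_cancel_left, norm_smul, Real.norm_eq_abs, abs_of_pos ht₀]
  gcongr
  linarith [norm_sub_le_norm_sub_add_norm_sub p x₀ x, mem_closedBall_iff_norm.1 hp]

theorem exists_mem_domGrad_near (hf : ClosedConvexFun f) (hv : v ∈ subdiff f x) {x₀ : Euc d}
    {ρ M t : ℝ} (hρ : 0 < ρ) (hball : closedBall x₀ ρ ⊆ interior (effDom f))
    (hM : ∀ p ∈ closedBall x₀ ρ, toRealFun f p ≤ M) (ht₀ : 0 < t) (ht₁ : t ≤ 1) :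
    ∃ z ∈ domGrad f, ‖z - x‖ ≤ t * (‖x₀ - x‖ + ρ) ∧
      ‖gradient (toRealFun f) z - v‖ ≤ 2 * (M - toRealFun f x + (‖x₀ - x‖ + ρ) * ‖v‖) / ρ := by
  set F := toRealFun f
  set c := x + t • (x₀ - x)
  have key := fun w (hw : w ∈ ball c (t * ρ)) =>
    hf.mem_interior_and_le_of_mem_ball_homothety (hf.mem_effDom_of_mem_subdiff hv) hball hM
      ht₀ ht₁ hw
  have hhalf : ball c (t * ρ / 2) ⊆ ball c (t * ρ) :=
    ball_subset_ball (by linarith [mul_pos ht₀ hρ])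
  obtain ⟨z, hzc, hzd⟩ := (hf.convexOn_toRealFun.subset
    (fun w hw => interior_subset (key w (hhalf hw)).1) (convex_ball c _)).exists_differentiableAt
    isOpen_ball (nonempty_ball.2 (by positivity))
  have hz : z ∈ domGrad f := ⟨(key z (hhalf hzc)).1, hzd⟩
  refine ⟨z, hz, (key z (hhalf hzc)).2.2, ?_⟩
  have hbound : t * ρ / 2 * ‖gradient F z - v‖ ≤ t * (M - F x + (‖x₀ - x‖ + ρ) * ‖v‖) := by
    refine mul_norm_le_of_forall_inner_le (z := z) (by positivity) fun w hw => ?_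
    have hwc : w ∈ ball c (t * ρ) := by
      rw [mem_ball] at hzc ⊢
      rw [mem_closedBall] at hw
      linarith [dist_triangle w z c]
    obtain ⟨hwD, hwF, hwx⟩ := key w hwc
    have hgv := hf.inner_sub_sub_le_of_mem_subdiff (hf.gradient_mem_subdiff hz) hv
      (interior_subset hwD)
    have hvw : -⟪w - x, v⟫ ≤ t * (‖x₀ - x‖ + ρ) * ‖v‖ := (neg_le_abs _).trans
      ((abs_real_inner_le_norm _ _).trans (mul_le_mul_of_nonneg_right hwx (norm_nonneg v)))
    linarith
  rw [le_div_iff₀ hρ]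
  exact le_of_mul_le_mul_left (by linarith) ht₀

theorem exists_tendsto_gradient (hf : ClosedConvexFun f) (hD : (interior (effDom f)).Nonempty)
    (hv : v ∈ subdiff f x) :
    ∃ (zs : ℕ → Euc d) (w : Euc d), (∀ n, zs n ∈ domGrad f) ∧ Tendsto zs atTop (𝓝 x) ∧
      Tendsto (fun n => gradient (toRealFun f) (zs n)) atTop (𝓝 w) := by
  obtain ⟨x₀, hx₀⟩ := hD
  obtain ⟨ρ, hρ, M, hball, hM⟩ := hf.exists_closedBall_bound hx₀
  choose zs hzs hzx hzv using fun n : ℕ =>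
    hf.exists_mem_domGrad_near hv hρ hball hM (t := 1 / (n + 1)) (by positivity)
      (div_le_one_of_le₀ (by linarith [n.cast_nonneg (α := ℝ)]) (by positivity))
  obtain ⟨w, -, φ, hφ, hw⟩ := (isCompact_closedBall v _).tendsto_subseq
    fun n => mem_closedBall_iff_norm.2 (hzv n)
  have hzs_tendsto : Tendsto zs atTop (𝓝 x) := by
    refine tendsto_iff_norm_sub_tendsto_zero.2 (squeeze_zero (fun _ => norm_nonneg _) hzx ?_)
    simpa using tendsto_one_div_add_atTop_nhds_zero_nat.mul_const (‖x₀ - x‖ + ρ)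
  exact ⟨zs ∘ φ, w, fun n => hzs (φ n), hzs_tendsto.comp hφ.tendsto_atTop, hw⟩

end ClosedConvexFun

/-- Lemma 5 of the paper, first part. -/
theorem stmt7 {d : ℕ} (f : Euc d → EReal) (hf : ClosedConvexFun f)
    (hD : (interior (effDom f)).Nonempty)
    (A : Set (Euc d)) (hA : IsClosed A)
    (hfA : ∀ x ∈ closure (interior (effDom f)), restrSup f A x = f x) :
    (∀ x ∈ closure (interior (effDom f)), subdiff f x ∩ A = argMaxOn f A x) ∧
    {x | (argMaxOn f A x).Nonempty} ∩ closure (interior (effDom f)) =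
      {x | (subdiff f x).Nonempty} ∧
    {x | (subdiff f x).Nonempty} = {x | (clarke f x).Nonempty} := by
  have hArg : ∀ x ∈ closure (interior (effDom f)), subdiff f x ∩ A = argMaxOn f A x :=
    fun x hx => subdiff_inter_eq_argMaxOn (hfA x hx)
  refine ⟨hArg, Set.ext fun x => ⟨fun ⟨hne, hx⟩ => ?_, fun ⟨v, hv⟩ => ?_⟩,
    Set.ext fun x => ⟨fun ⟨v, hv⟩ => ?_, fun hne => ?_⟩⟩
  · rw [mem_ofPred_eq, ← hArg x hx] at hne
    exact hne.mono inter_subset_left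
  · have hx := hf.effDom_subset_closure_interior hD (hf.mem_effDom_of_mem_subdiff hv)
    obtain ⟨zs, w, hzs, hzx, hzw⟩ := hf.exists_tendsto_gradient hD hv
    have hwA : w ∈ A := hA.mem_of_tendsto hzw <| .of_forall fun n =>
      hf.gradient_mem hA (hzs n) (hfA _ (subset_closure (hzs n).1))
    refine ⟨?_, hx⟩
    rw [mem_ofPred_eq, ← hArg x hx]
    exact ⟨w, hf.mem_subdiff_of_tendsto_gradient hzs hzx hzw, hwA⟩
  · obtain ⟨zs, w, hzs, hzx, hzw⟩ := hf.exists_tendsto_gradient hD hv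
    exact ⟨w, subset_closure (subset_convexHull ℝ _ ⟨zs, hzs, hzx, hzw⟩)⟩
  · obtain ⟨w, zs, hzs, hzx, hzw⟩ := convexHull_nonempty_iff.1 (closure_nonempty_iff.1 hne)
    exact ⟨w, hf.mem_subdiff_of_tendsto_gradient hzs hzx hzw⟩

end
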